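/- For k ≥ 1, define the polynomial map M_k from real sequences c : ℕ → ℝ to ℝ by the classical cumulant-to-moment formula M_k(c) = ∑_{π} ∏_{B ∈ π} (|B| − 1)! · c(|B|), where the sum is over all partitions π of a k-element set and |B| is the cardinality of the block B. Let c* be the cumulant sequence of the standard Gaussian, c*(j) = 1 if j = 2 and 0 otherwise. Then for every sequence f : ℕ → ℝ, the function ε ↦ M_k(c* + ε·f) has derivative at ε = 0 equal to ∑_{n=1}^{k} a_{k,n} · f(n), where a_{k,n} = k!/(n · ((k−n)/2)! · 2^{(k−n)/2}) if n ≤ k and k − n is even and nonnegative, and a_{k,n} = 0 otherwise. That is, the linearization of the cumulant-to-moment transform at the standard Gaussian is the lower-triangular matrix A = (a_{k,n}), where a_{n+2j,n} is (n−1)! times the number of partitions of n+2j elements into classes exactly one of which contains n elements and the remaining j classes are pairs. -/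

import Mathlib

open Finset

/-- The classical cumulant-to-moment transform: the `k`-th moment as a polynomial
function of the cumulant sequence `c`, `M_k(c) = ∑_π ∏_{B ∈ π} (|B|−1)! c(|B|)`,
the sum running over all partitions of a `k`-element set. -/
noncomputable def cumulantToMoment (k : ℕ) (c : ℕ → ℝ) : ℝ :=
  ∑ π : Finpartition (Finset.univ : Finset (Fin k)),
    ∏ B ∈ π.parts, ((B.card - 1).factorial : ℝ) * c B.card

/-- The cumulant sequence of the standard Gaussian: `c*(2) = 1` and `c*(j) = 0`
otherwise. -/
noncomputable def gaussianCumulant : ℕ → ℝ := fun j => if j = 2 then 1 else 0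

/-- The entries of the linearization of the cumulant-to-moment transform at the
standard Gaussian: `a_{k,n} = k!/(n ((k−n)/2)! 2^{(k−n)/2})` when `n ≤ k` and `k − n`
is even, and `0` otherwise; `a_{n+2j,n}` is `(n−1)!` times the number of partitions of
`n+2j` elements into one class of `n` elements and `j` pairs. -/
noncomputable def clA (k n : ℕ) : ℝ :=
  if n ≤ k ∧ (k - n) % 2 = 0 then
    (k.factorial : ℝ) / (n * ((k - n) / 2).factorial * 2 ^ ((k - n) / 2))
  else 0

/-!
Differentiating the product over the blocks of a partition marks one block `B`, and a partition
with a marked block `B` is the same thing as `B` together with a partition of the complement of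
`B`. Hence the derivative of `ε ↦ M_k(c + ε f)` at `0` is `∑_B (|B|-1)! f(|B|) M_{k-|B|}(c)`,
the sum over nonempty `B`. At the Gaussian, `M_m(c*)` counts the perfect matchings of `m` points,
`(m-1)‼` for even `m` and `0` for odd `m` (recursion on the block containing a fixed point), and
grouping the subsets `B` by their size `n` gives `C(k,n) (n-1)! (k-n-1)‼ = a_{k,n}`.
-/

open scoped Nat

namespace Finpartition

section GeneralizedBooleanAlgebra

variable {α : Type*} [GeneralizedBooleanAlgebra α] [DecidableEq α] {a b : α}

theorem parts_avoid_of_mem {P : Finpartition a} (hb : b ∈ P.parts) :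
    (P.avoid b).parts = P.parts.erase b := by
  ext c
  rw [mem_avoid, mem_erase]
  constructor
  · rintro ⟨d, hd, hdb, rfl⟩
    have hne : d ≠ b := fun h => hdb h.le
    have hdisj : Disjoint d b := P.disjoint hd hb hne
    rw [hdisj.sdiff_eq_left]
    exact ⟨hne, hd⟩
  · rintro ⟨hcb, hc⟩
    have hdisj : Disjoint c b := P.disjoint hc hb hcb
    exact ⟨c, hc, fun hle => P.ne_bot hc (hdisj.eq_bot_of_le hle), hdisj.sdiff_eq_left⟩

end GeneralizedBooleanAlgebra

variable {α : Type*} [DecidableEq α] {s B : Finset α} {M : Type*} [AddCommMonoid M]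

theorem sum_filter_mem_parts (hBs : B ⊆ s) (hB : B.Nonempty) (F : Finset (Finset α) → M) :
    ∑ P : Finpartition s with B ∈ P.parts, F (P.parts.erase B) =
      ∑ Q : Finpartition (s \ B), F Q.parts := by
  have hBQ (Q : Finpartition (s \ B)) : B ∉ Q.parts := fun h => by
    obtain ⟨x, hx⟩ := hB
    exact (mem_sdiff.mp (Q.subset h hx)).2 hx
  refine sum_nbij' (fun P => P.avoid B)
    (fun Q => Q.extend hB.ne_empty disjoint_sdiff_self_left (sdiff_sup_cancel hBs))
    (fun _ _ => mem_univ _) (fun Q _ => by simp) (fun P hP => ?_) (fun Q _ => ?_) (fun P hP => ?_)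
  · rw [mem_filter] at hP
    ext1
    rw [extend_parts, parts_avoid_of_mem hP.2, insert_erase hP.2]
  · ext1
    rw [parts_avoid_of_mem (by simp), extend_parts, erase_insert (hBQ Q)]
  · rw [parts_avoid_of_mem (mem_filter.mp hP).2]

theorem sum_sum_filter_parts (p : Finset α → Prop) [DecidablePred p]
    (F : Finset α → Finset (Finset α) → M) :
    ∑ P : Finpartition s, ∑ B ∈ P.parts with p B, F B (P.parts.erase B) =
      ∑ B ∈ s.powerset with B.Nonempty ∧ p B, ∑ Q : Finpartition (s \ B), F B Q.parts := by
  rw [sum_comm' (t' := s.powerset.filter fun B => B.Nonempty ∧ p B)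
    (s' := fun B => univ.filter fun P : Finpartition s => B ∈ P.parts)]
  · refine sum_congr rfl fun B hB => ?_
    rw [mem_filter, mem_powerset] at hB
    exact sum_filter_mem_parts hB.1 hB.2.1 (F B)
  · intro P B
    simp only [mem_univ, mem_filter, mem_powerset, true_and]
    exact ⟨fun h => ⟨h.1, P.subset h.1, P.nonempty_of_mem_parts h.1, h.2⟩,
      fun h => ⟨h.1, h.2.2.2⟩⟩

theorem filter_mem_parts_eq_singleton (P : Finpartition s) {a : α} (ha : a ∈ s) :
    P.parts.filter (a ∈ ·) = {P.part a} := by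
  ext t
  rw [mem_filter, mem_singleton]
  constructor
  · rintro ⟨ht, hat⟩
    exact ((P.part_eq_iff_mem ht).mpr hat).symm
  · rintro rfl
    exact ⟨P.part_mem.mpr ha, P.mem_part_self.mpr ha⟩

end Finpartition

theorem Nat.factorial_two_mul_eq_doubleFactorial_mul (j : ℕ) :
    (2 * j)! = (2 * j - 1)‼ * (2 ^ j * j !) := by
  cases j with
  | zero => rfl
  | succ i =>
    rw [← Nat.doubleFactorial_two_mul, show 2 * (i + 1) = 2 * i + 1 + 1 by ring,
      Nat.factorial_eq_mul_doubleFactorial, Nat.add_sub_cancel, mul_comm]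

theorem Finset.sum_powerset_filter_nonempty_apply_card {β M : Type*} [AddCommMonoid M]
    (g : ℕ → M) (s : Finset β) :
    ∑ B ∈ s.powerset with B.Nonempty, g #B = ∑ n ∈ Icc 1 #s, (#s).choose n • g n := by
  rw [← sum_fiberwise_of_maps_to (g := card) (t := Icc 1 #s) fun B hB => by
    rw [mem_filter, mem_powerset] at hB
    exact mem_Icc.mpr ⟨hB.2.card_pos, card_le_card hB.1⟩]
  refine sum_congr rfl fun n hn => ?_
  rw [← card_powersetCard, ← sum_const, powersetCard_eq_filter, filter_filter]
  refine sum_congr (filter_congr fun B _ => ?_) fun B hB => by rw [(mem_filter.mp hB).2]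
  rw [← card_pos]
  constructor
  · exact fun h => h.2
  · rintro rfl
    exact ⟨(mem_Icc.mp hn).1, rfl⟩

section PartitionMoment

variable {α : Type*} [DecidableEq α]

noncomputable def partitionMoment (s : Finset α) (c : ℕ → ℝ) : ℝ :=
  ∑ P : Finpartition s, ∏ B ∈ P.parts, ((#B - 1)! : ℝ) * c #B

theorem cumulantToMoment_eq_partitionMoment (k : ℕ) (c : ℕ → ℝ) :
    cumulantToMoment k c = partitionMoment (univ : Finset (Fin k)) c :=
  rfl

theorem partitionMoment_empty (c : ℕ → ℝ) : partitionMoment (∅ : Finset α) c = 1 := by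
  rw [partitionMoment, show (∅ : Finset α) = ⊥ from rfl, Fintype.sum_unique,
    Finpartition.parts_eq_empty_iff.mpr rfl, prod_empty]

theorem partitionMoment_eq_sum_of_mem (c : ℕ → ℝ) {s : Finset α} {a : α} (ha : a ∈ s) :
    partitionMoment s c =
      ∑ B ∈ s.powerset with a ∈ B, (#B - 1)! * c #B * partitionMoment (s \ B) c := by
  set w : Finset α → ℝ := fun B => (#B - 1)! * c #B
  calc partitionMoment s c
      = ∑ P : Finpartition s,
          ∑ B ∈ P.parts with a ∈ B, w B * ∏ C ∈ P.parts.erase B, w C := by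
        refine sum_congr rfl fun P _ => ?_
        rw [P.filter_mem_parts_eq_singleton ha, sum_singleton,
          mul_prod_erase _ _ (P.part_mem.mpr ha)]
    _ = ∑ B ∈ s.powerset with B.Nonempty ∧ a ∈ B,
          ∑ Q : Finpartition (s \ B), w B * ∏ C ∈ Q.parts, w C :=
        Finpartition.sum_sum_filter_parts (a ∈ ·) fun B Q => w B * ∏ C ∈ Q, w C
    _ = _ := by
        rw [filter_congr fun B _ => and_iff_right_of_imp fun h => ⟨a, h⟩]
        simp only [partitionMoment, mul_sum, w]

theorem partitionMoment_insert (c : ℕ → ℝ) {s : Finset α} {a : α} (ha : a ∉ s) :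
    partitionMoment (insert a s) c =
      ∑ t ∈ s.powerset, (#t)! * c (#t + 1) * partitionMoment (s \ t) c := by
  rw [partitionMoment_eq_sum_of_mem c (mem_insert_self a s), sum_filter, sum_powerset_insert ha]
  have hnot : ∀ t ∈ s.powerset, a ∉ t := fun t ht hat => ha (mem_powerset.mp ht hat)
  rw [sum_eq_zero fun t ht => if_neg (hnot t ht), zero_add]
  refine sum_congr rfl fun t ht => ?_
  rw [if_pos (mem_insert_self a t), card_insert_of_notMem (hnot t ht), insert_sdiff_insert,
    sdiff_insert_of_notMem ha, Nat.add_sub_cancel]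

theorem hasDerivAt_partitionMoment (s : Finset α) (c f : ℕ → ℝ) :
    HasDerivAt (fun ε : ℝ => partitionMoment s fun j => c j + ε * f j)
      (∑ B ∈ s.powerset with B.Nonempty, (#B - 1)! * f #B * partitionMoment (s \ B) c) 0 := by
  have h := HasDerivAt.fun_sum (u := univ) fun (P : Finpartition s) _ =>
    HasDerivAt.fun_finsetProd (u := P.parts) fun B _ =>
      (((hasDerivAt_id (0 : ℝ)).mul_const (f #B)).const_add (c #B)).const_mul ((#B - 1)! : ℝ)
  refine h.congr_deriv ?_
  simp only [id, zero_mul, add_zero, one_mul, smul_eq_mul]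
  have hmarked := Finpartition.sum_sum_filter_parts (s := s) (fun _ => True)
    fun B Q => (∏ C ∈ Q, ((#C - 1)! : ℝ) * c #C) * ((#B - 1)! * f #B)
  simp only [filter_true, and_true] at hmarked
  rw [hmarked]
  refine sum_congr rfl fun B _ => ?_
  rw [← sum_mul, partitionMoment, mul_comm]

end PartitionMoment

-- For `m = 0` truncated subtraction gives `(0 - 1)‼ = 0‼ = 1`, the empty matching.
noncomputable def gaussianMoment (m : ℕ) : ℝ :=
  if Even m then ((m - 1)‼ : ℝ) else 0

theorem gaussianMoment_add_two (m : ℕ) : gaussianMoment (m + 2) = (m + 1) * gaussianMoment m := by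
  have hm : Even (m + 2) ↔ Even m := by simp [Nat.even_add]
  rw [gaussianMoment, gaussianMoment, if_congr hm rfl rfl, mul_ite, mul_zero,
    show m + 2 - 1 = m + 1 from rfl, Nat.doubleFactorial_add_one]
  push_cast
  rfl

theorem gaussianMoment_succ (n : ℕ) : gaussianMoment (n + 1) = n * gaussianMoment (n - 1) := by
  cases n with
  | zero => simp [gaussianMoment]
  | succ m => rw [gaussianMoment_add_two]; push_cast; rfl

theorem partitionMoment_gaussianCumulant {α : Type*} [DecidableEq α] (s : Finset α) :
    partitionMoment s gaussianCumulant = gaussianMoment #s := by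
  induction hn : #s using Nat.strong_induction_on generalizing s with
  | _ n ih =>
  cases n with
  | zero => rw [card_eq_zero.mp hn, partitionMoment_empty]; simp [gaussianMoment]
  | succ n =>
    obtain ⟨a, t, hat, rfl, rfl⟩ := card_eq_succ.mp hn
    have hterm : ∀ u ∈ t.powerset,
        ((#u)! : ℝ) * gaussianCumulant (#u + 1) * partitionMoment (t \ u) gaussianCumulant =
          if #u = 1 then gaussianMoment (#t - 1) else 0 := by
      intro u hu
      split_ifs with h1
      · rw [h1, ih (#t - 1) (by omega) (t \ u)
          (by rw [card_sdiff_of_subset (mem_powerset.mp hu), h1])]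
        simp [gaussianCumulant]
      · simp [gaussianCumulant, h1]
    rw [partitionMoment_insert _ hat, gaussianMoment_succ, sum_congr rfl hterm, ← sum_filter,
      ← powersetCard_eq_filter, sum_const, card_powersetCard, Nat.choose_one_right, nsmul_eq_mul]

theorem clA_eq_choose_mul_gaussianMoment {k n : ℕ} (h1 : 1 ≤ n) (h2 : n ≤ k) :
    clA k n = k.choose n * (n - 1)! * gaussianMoment (k - n) := by
  rw [clA, gaussianMoment]
  obtain ⟨j, hj⟩ | hodd := Nat.even_or_odd (k - n)
  · rw [if_pos ⟨h2, by omega⟩, if_pos ⟨j, hj⟩, hj, ← two_mul,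
      Nat.mul_div_cancel_left _ two_pos, div_eq_iff (by positivity)]
    rw [← Nat.choose_mul_factorial_mul_factorial h2, hj, ← two_mul,
      Nat.factorial_two_mul_eq_doubleFactorial_mul, ← Nat.mul_factorial_pred (by omega)]
    push_cast
    ring
  · rw [if_neg fun h => Nat.not_even_iff_odd.mpr hodd (Nat.even_iff.mpr h.2),
      if_neg (Nat.not_even_iff_odd.mpr hodd), mul_zero]

theorem deriv_cumulantToMoment_at_gaussian_general (k : ℕ) (f : ℕ → ℝ) :
    HasDerivAt
      (fun ε : ℝ => cumulantToMoment k (fun j => gaussianCumulant j + ε * f j))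
      (∑ n ∈ Finset.Icc 1 k, clA k n * f n) 0 := by
  simp only [cumulantToMoment_eq_partitionMoment]
  refine (hasDerivAt_partitionMoment univ gaussianCumulant f).congr_deriv ?_
  simp_rw [partitionMoment_gaussianCumulant, card_univ_sdiff, Fintype.card_fin]
  rw [sum_powerset_filter_nonempty_apply_card
    (fun n => ((n - 1)! : ℝ) * f n * gaussianMoment (k - n)), Finset.card_fin]
  refine sum_congr rfl fun n hn => ?_
  rw [mem_Icc] at hn
  rw [clA_eq_choose_mul_gaussianMoment hn.1 hn.2, nsmul_eq_mul]
  ring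

/-- The linearization (Gâteaux derivative) of the classical cumulant-to-moment
transform at the standard Gaussian is given by the lower-triangular matrix
`A = (a_{k,n})`: for every direction `f`, the derivative of `ε ↦ M_k(c* + εf)` at
`ε = 0` is `∑_{n=1}^{k} a_{k,n} f(n)`. -/
theorem deriv_cumulantToMoment_at_gaussian (k : ℕ) (hk : 1 ≤ k) (f : ℕ → ℝ) :
    HasDerivAt
      (fun ε : ℝ => cumulantToMoment k (fun j => gaussianCumulant j + ε * f j))
      (∑ n ∈ Finset.Icc 1 k, clA k n * f n) 0 :=
  deriv_cumulantToMoment_at_gaussian_general k f
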